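/- Let n ≥ 2, m ≥ 1 and c > 0, fix ω_0 ∈ S^{n−1} and δ > 0, and let f ∈ C_c^∞(ℝ^{1+n}; S^m). Assume L̃^{m,k} f((t,x), ω) = 0 for all k = 0,1,…,m, all (t,x) ∈ ℝ^{1+n} and all ω ∈ B_n(ω_0, δ). Then for every k = 0,1,…,m−1, every i ∈ {1,…,n}, all (t,x) ∈ ℝ^{1+n} and all ω ∈ B_n(ω_0, δ): L̃^{m−1,k}((f)_i)((t,x), ω) = −c ω_i · L̃^{m−1,k}((f)_0)((t,x), ω). -/

import Mathlib

open MeasureTheory Finset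

noncomputable section

/-- The light direction `ω̃ = (c, ω) ∈ ℝ^{1+n}`. -/
def ld (n : ℕ) (c : ℝ) (ω : Fin n → ℝ) : Fin (n + 1) → ℝ := Fin.cons c ω

/-- The `k`-th momentum light ray transform of a rank-`m` symmetric tensor field,
`L^{m,k} f((t,x), ω) = Σ ω̃_{i_1}⋯ω̃_{i_m} ∫ s^k f_{i_1…i_m}((t,x) + s ω̃) ds`. -/
def mlrt (n m : ℕ) (c : ℝ) (k : ℕ)
    (f : (Fin m → Fin (n + 1)) → (Fin (n + 1) → ℝ) → ℂ)
    (x : Fin (n + 1) → ℝ) (ω : Fin n → ℝ) : ℂ :=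
  ∑ i : Fin m → Fin (n + 1),
    (∏ j, (ld n c ω (i j) : ℂ)) *
      ∫ s : ℝ, (s : ℂ) ^ k * f i (x + s • ld n c ω)

/-- A tensor field is symmetric: invariant under permutations of its indices. -/
def IsSymmF (n m : ℕ) (f : (Fin m → Fin (n + 1)) → (Fin (n + 1) → ℝ) → ℂ) : Prop :=
  ∀ (σ : Equiv.Perm (Fin m)) (i : Fin m → Fin (n + 1)), f (i ∘ σ) = f i

/-- All components are smooth and compactly supported. -/
def IsCc (n m : ℕ) (f : (Fin m → Fin (n + 1)) → (Fin (n + 1) → ℝ) → ℂ) : Prop :=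
  ∀ i, ContDiff ℝ (⊤ : ℕ∞) (f i) ∧ HasCompactSupport (f i)

/-- `ω ∈ S^{n-1}` (Euclidean unit sphere). -/
def onSphere (n : ℕ) (ω : Fin n → ℝ) : Prop := ∑ i, ω i ^ 2 = 1

/-- `ω ∈ B_n(ω₀, δ)`: on the sphere and at Euclidean distance `< δ` from `ω₀`. -/
def inBall (n : ℕ) (ω₀ : Fin n → ℝ) (δ : ℝ) (ω : Fin n → ℝ) : Prop :=
  onSphere n ω ∧ ∑ i, (ω i - ω₀ i) ^ 2 < δ ^ 2

section Helpers

open Filter Topology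

lemma key_hasDerivAt {n : ℕ} {g : (Fin (n+1) → ℝ) → ℂ}
    (hg : ContDiff ℝ (⊤ : ℕ∞) g) (hcs : HasCompactSupport g)
    (k : ℕ) {c : ℝ} (hc : 0 < c)
    {ψ φ dψ dφ : ℝ → Fin (n+1) → ℝ}
    (hψ : ∀ t, HasDerivAt ψ (dψ t) t) (hφ : ∀ t, HasDerivAt φ (dφ t) t)
    (hdψ : Continuous dψ) (hdφ : Continuous dφ)
    (hψ0 : ∀ t, ψ t 0 = ψ 0 0) (hφ0 : ∀ t, φ t 0 = c) :
    HasDerivAt (fun t => ∫ s : ℝ, (s:ℂ)^k * g (ψ t + s • φ t))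
      (∫ s : ℝ, (s:ℂ)^k * fderiv ℝ g (ψ 0 + s • φ 0) (dψ 0 + s • dφ 0)) 0 := by
  obtain ⟨R, hR⟩ := hcs.isCompact.isBounded.subset_closedBall 0
  set S : ℝ := (|R| + |ψ 0 0|)/c with hS
  have hS0 : 0 ≤ S := div_nonneg (by positivity) hc.le
  have hcomp : ∀ t s : ℝ, (ψ t + s • φ t) 0 = ψ 0 0 + s * c := by
    intro t s
    simp [hψ0 t, hφ0 t]
  have hout : ∀ t s : ℝ, S < |s| → (ψ t + s • φ t) ∉ tsupport g := by
    intro t s hs hmem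
    have h1 : ‖ψ t + s • φ t‖ ≤ R := by simpa using hR hmem
    have h2 : |(ψ t + s • φ t) 0| ≤ ‖ψ t + s • φ t‖ := by
      simpa using norm_le_pi_norm (ψ t + s • φ t) 0
    have h3 : |ψ 0 0 + s * c| ≤ R := by rw [← hcomp t s]; exact h2.trans h1
    have h4 : |s| * c ≤ |R| + |ψ 0 0| := by
      have h5 : |s * c| - |ψ 0 0| ≤ |ψ 0 0 + s * c| := by
        have := abs_sub_abs_le_abs_sub (s * c) (-(ψ 0 0))
        simp only [abs_neg, sub_neg_eq_add] at this
        calc |s * c| - |ψ 0 0| ≤ |s * c + ψ 0 0| := this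
          _ = |ψ 0 0 + s * c| := by rw [add_comm]
      have h6 : |s * c| ≤ |R| + |ψ 0 0| := by
        have := h5.trans (h3.trans (le_abs_self R))
        linarith
      rwa [abs_mul, abs_of_pos hc] at h6
    have h6 : S * c < |s| * c := mul_lt_mul_of_pos_right hs hc
    rw [hS, div_mul_cancel₀ _ hc.ne'] at h6
    linarith
  have gzero : ∀ t s : ℝ, S < |s| → g (ψ t + s • φ t) = 0 := fun t s hs =>
    image_eq_zero_of_notMem_tsupport (hout t s hs)
  have fzero : ∀ t s : ℝ, S < |s| → fderiv ℝ g (ψ t + s • φ t) = 0 := by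
    intro t s hs
    by_contra hne
    exact hout t s hs (support_fderiv_subset ℝ (Function.mem_support.2 hne))
  obtain ⟨M₀, hM₀⟩ := Continuous.bounded_above_of_compact_support
    (hg.continuous_fderiv (by simp)) (hcs.fderiv (𝕜 := ℝ))
  set M := max M₀ 0 with hMdef
  have hM : ∀ y, ‖fderiv ℝ g y‖ ≤ M := fun y => (hM₀ y).trans (le_max_left _ _)
  have hM0 : 0 ≤ M := le_max_right _ _
  obtain ⟨Cψ₀, hCψ₀⟩ := (isCompact_Icc (a := (-1:ℝ)) (b := 1)).exists_bound_of_continuousOn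
    hdψ.continuousOn
  obtain ⟨Cφ₀, hCφ₀⟩ := (isCompact_Icc (a := (-1:ℝ)) (b := 1)).exists_bound_of_continuousOn
    hdφ.continuousOn
  set Cψ := max Cψ₀ 0
  set Cφ := max Cφ₀ 0
  have hCψ : ∀ t ∈ Set.Icc (-1:ℝ) 1, ‖dψ t‖ ≤ Cψ := fun t ht =>
    (hCψ₀ t ht).trans (le_max_left _ _)
  have hCφ : ∀ t ∈ Set.Icc (-1:ℝ) 1, ‖dφ t‖ ≤ Cφ := fun t ht =>
    (hCφ₀ t ht).trans (le_max_left _ _)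
  have hCψ0 : 0 ≤ Cψ := le_max_right _ _
  have hCφ0 : 0 ≤ Cφ := le_max_right _ _
  set B : ℝ := S^k * (M * (Cψ + S * Cφ)) with hBdef
  have hB0 : 0 ≤ B := by positivity
  have hcont : ∀ t : ℝ, Continuous fun s : ℝ => ψ t + s • φ t := fun t =>
    continuous_const.add (continuous_id.smul continuous_const)
  have key := hasDerivAt_integral_of_dominated_loc_of_deriv_le (μ := volume) (x₀ := (0:ℝ))
    (F := fun t s => (s:ℂ)^k * g (ψ t + s • φ t))
    (F' := fun t s => (s:ℂ)^k * fderiv ℝ g (ψ t + s • φ t) (dψ t + s • dφ t))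
    (bound := Set.indicator (Set.Icc (-S) S) fun _ => B)
    (s := Metric.ball 0 1) (Metric.ball_mem_nhds _ one_pos)
    (Eventually.of_forall fun t =>
      ((Complex.continuous_ofReal.pow k).mul (hg.continuous.comp (hcont t))).aestronglyMeasurable)
    ?_ ?_ ?_ ?_ ?_
  · exact key.2
  · apply Continuous.integrable_of_hasCompactSupport
    · exact (Complex.continuous_ofReal.pow k).mul (hg.continuous.comp (hcont 0))
    · apply HasCompactSupport.intro (isCompact_Icc (a := -S) (b := S))
      intro s hs
      have : S < |s| := by
        rcases lt_or_ge S |s| with h | h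
        · exact h
        · exact absurd (by rw [Set.mem_Icc]; exact abs_le.1 h) hs
      show (s:ℂ)^k * g (ψ 0 + s • φ 0) = 0
      rw [gzero 0 s this, mul_zero]
  · apply Continuous.aestronglyMeasurable
    exact (Complex.continuous_ofReal.pow k).mul
      ((((hg.continuous_fderiv (by simp)).comp (hcont 0)).clm_apply
        (continuous_const.add (continuous_id.smul continuous_const))))
  · apply Eventually.of_forall
    intro s t ht
    by_cases hs : |s| ≤ S
    · rw [Set.indicator_of_mem (by rw [Set.mem_Icc]; exact abs_le.1 hs)]
      have ht' : t ∈ Set.Icc (-1:ℝ) 1 := by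
        rw [Metric.mem_ball, Real.dist_eq, sub_zero] at ht
        rw [Set.mem_Icc]
        constructor <;> [linarith [abs_le.1 ht.le |>.1]; linarith [abs_le.1 ht.le |>.2]]
      rw [norm_mul]
      have e1 : ‖(s:ℂ)^k‖ = |s|^k := by
        rw [norm_pow, Complex.norm_real, Real.norm_eq_abs]
      have e2 : ‖fderiv ℝ g (ψ t + s • φ t) (dψ t + s • dφ t)‖ ≤ M * (Cψ + S * Cφ) := by
        calc ‖fderiv ℝ g (ψ t + s • φ t) (dψ t + s • dφ t)‖
            ≤ ‖fderiv ℝ g (ψ t + s • φ t)‖ * ‖dψ t + s • dφ t‖ :=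
              ContinuousLinearMap.le_opNorm _ _
          _ ≤ M * (Cψ + S * Cφ) := by
              apply mul_le_mul (hM _) ?_ (norm_nonneg _) hM0
              calc ‖dψ t + s • dφ t‖ ≤ ‖dψ t‖ + ‖s • dφ t‖ := norm_add_le _ _
                _ = ‖dψ t‖ + |s| * ‖dφ t‖ := by rw [norm_smul, Real.norm_eq_abs]
                _ ≤ Cψ + S * Cφ := by
                    apply add_le_add (hCψ t ht')
                    exact mul_le_mul hs (hCφ t ht') (norm_nonneg _) hS0
      rw [e1, hBdef]
      apply mul_le_mul (pow_le_pow_left₀ (abs_nonneg s) hs k) e2 (norm_nonneg _) (by positivity)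
    · rw [Set.indicator_of_notMem (by rw [Set.mem_Icc]; exact fun h => hs (abs_le.2 h))]
      show ‖(s:ℂ)^k * fderiv ℝ g (ψ t + s • φ t) (dψ t + s • dφ t)‖ ≤ 0
      rw [fzero t s (lt_of_not_ge hs)]
      simp
  · rw [integrable_indicator_iff measurableSet_Icc]
    exact integrableOn_const measure_Icc_lt_top.ne
  · apply Eventually.of_forall
    intro s t ht
    have h₁ : HasDerivAt (fun t => ψ t + s • φ t) (dψ t + s • dφ t) t :=
      (hψ t).add ((hφ t).const_smul s)
    have h₂ := ((hg.differentiable (by simp)) (ψ t + s • φ t)).hasFDerivAt.comp_hasDerivAt t h₁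
    exact h₂.const_mul _

lemma erase_last_eq {m : ℕ} :
    (univ : Finset (Fin (m+1))).erase (Fin.last m) = univ.map Fin.castSuccEmb := by
  rw [← Fin.Iio_last_eq_map]
  ext j
  simp only [mem_erase, mem_univ, and_true, Finset.mem_Iio]
  constructor
  · exact fun h => lt_of_le_of_ne (Fin.le_last j) h
  · exact fun h => ne_of_lt h

lemma prod_erase_last {m : ℕ} (g : Fin (m+1) → ℂ) :
    ∏ j ∈ (univ : Finset (Fin (m+1))).erase (Fin.last m), g j
      = ∏ j : Fin m, g (Fin.castSucc j) := by
  rw [erase_last_eq, Finset.prod_map]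
  rfl

lemma sum_snoc_split {β : Type*} [Fintype β] [DecidableEq β] {m : ℕ}
    (u w : β → ℂ) (F : (Fin (m+1) → β) → ℂ) :
    ∑ i : Fin (m+1) → β, u (i (Fin.last m)) * (∏ j : Fin m, w (i (Fin.castSucc j))) * F i
      = ∑ p : β, u p * ∑ a : Fin m → β, (∏ j, w (a j)) * F (Fin.snoc a p) := by
  calc ∑ i : Fin (m+1) → β, u (i (Fin.last m)) * (∏ j : Fin m, w (i (Fin.castSucc j))) * F i
      = ∑ pa : β × (Fin m → β),
          u ((Fin.snocEquiv fun _ => β) pa (Fin.last m)) *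
            (∏ j : Fin m, w ((Fin.snocEquiv fun _ => β) pa (Fin.castSucc j))) *
            F ((Fin.snocEquiv fun _ => β) pa) :=
        (Equiv.sum_comp (Fin.snocEquiv fun _ => β)
          (fun i => u (i (Fin.last m)) * (∏ j : Fin m, w (i (Fin.castSucc j))) * F i)).symm
    _ = ∑ p : β, u p * ∑ a : Fin m → β, (∏ j, w (a j)) * F (Fin.snoc a p) := by
        rw [Fintype.sum_prod_type]
        refine Finset.sum_congr rfl fun p _ => ?_
        rw [Finset.mul_sum]
        refine Finset.sum_congr rfl fun a _ => ?_
        have he : (Fin.snocEquiv fun _ => β) (p, a) = Fin.snoc a p := rfl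
        rw [he, Fin.snoc_last]
        simp only [Fin.snoc_castSucc]
        ring

lemma swap_to_last {β : Type*} [Fintype β] [DecidableEq β] {m : ℕ}
    (u w : β → ℂ) (F : (Fin (m+1) → β) → ℂ)
    (hF : ∀ (σ : Equiv.Perm (Fin (m+1))) (i : Fin (m+1) → β), F (i ∘ σ) = F i)
    (j₀ : Fin (m+1)) :
    ∑ i : Fin (m+1) → β, u (i j₀) * (∏ j ∈ (univ : Finset (Fin (m+1))).erase j₀, w (i j)) * F i
      = ∑ i : Fin (m+1) → β,
          u (i (Fin.last m)) * (∏ j ∈ (univ : Finset (Fin (m+1))).erase (Fin.last m), w (i j)) * F i := by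
  set σ : Equiv.Perm (Fin (m+1)) := Equiv.swap j₀ (Fin.last m) with hσ
  have key : ∀ i : Fin (m+1) → β,
      u ((i ∘ σ) (Fin.last m)) * (∏ j ∈ (univ : Finset (Fin (m+1))).erase (Fin.last m), w ((i ∘ σ) j)) * F (i ∘ σ)
        = u (i j₀) * (∏ j ∈ (univ : Finset (Fin (m+1))).erase j₀, w (i j)) * F i := by
    intro i
    have h1 : (i ∘ σ) (Fin.last m) = i j₀ := by
      simp [hσ, Equiv.swap_apply_right]
    have h2 : ∏ j ∈ (univ : Finset (Fin (m+1))).erase (Fin.last m), w ((i ∘ σ) j)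
        = ∏ j ∈ (univ : Finset (Fin (m+1))).erase j₀, w (i j) := by
      apply Finset.prod_nbij' (i := fun j => σ j) (j := fun j => σ.symm j)
      · intro a ha
        simp only [mem_erase, mem_univ, and_true] at ha ⊢
        intro hcon
        apply ha
        rw [← Equiv.eq_symm_apply] at hcon
        rw [hcon]
        simp [hσ, Equiv.symm_swap, Equiv.swap_apply_left]
      · intro a ha
        simp only [mem_erase, mem_univ, and_true] at ha ⊢
        intro hcon
        apply ha
        rw [Equiv.symm_apply_eq] at hcon
        rw [hcon]
        simp [hσ, Equiv.swap_apply_right]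
      · intro a _; simp
      · intro a _; simp
      · intro a _; rfl
    rw [h1, h2, hF σ i]
  calc ∑ i : Fin (m+1) → β, u (i j₀) * (∏ j ∈ (univ : Finset (Fin (m+1))).erase j₀, w (i j)) * F i
      = ∑ i : Fin (m+1) → β,
          u ((i ∘ σ) (Fin.last m)) * (∏ j ∈ (univ : Finset (Fin (m+1))).erase (Fin.last m), w ((i ∘ σ) j)) * F (i ∘ σ) := by
        refine Finset.sum_congr rfl fun i _ => (key i).symm
    _ = ∑ i : Fin (m+1) → β,
          u (i (Fin.last m)) * (∏ j ∈ (univ : Finset (Fin (m+1))).erase (Fin.last m), w (i j)) * F i := by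
        exact Fintype.sum_bijective (fun i : Fin (m+1) → β => i ∘ σ)
          (Equiv.arrowCongr σ.symm (Equiv.refl β)).bijective
          (fun i => u ((i ∘ σ) (Fin.last m)) * (∏ j ∈ (univ : Finset (Fin (m+1))).erase (Fin.last m), w ((i ∘ σ) j)) * F (i ∘ σ))
          (fun i => u (i (Fin.last m)) * (∏ j ∈ (univ : Finset (Fin (m+1))).erase (Fin.last m), w (i j)) * F i)
          (fun i => rfl)

lemma mlrt_succ {n m : ℕ} (c : ℝ) (k : ℕ)
    (f : (Fin (m+1) → Fin (n+1)) → (Fin (n+1) → ℝ) → ℂ)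
    (x : Fin (n+1) → ℝ) (ω : Fin n → ℝ) :
    mlrt n (m+1) c k f x ω
      = ∑ p : Fin (n+1), (ld n c ω p : ℂ) * mlrt n m c k (fun a y => f (Fin.snoc a p) y) x ω := by
  show ∑ i : Fin (m+1) → Fin (n+1), (∏ j, (ld n c ω (i j) : ℂ)) *
      ∫ s : ℝ, (s : ℂ) ^ k * f i (x + s • ld n c ω) = _
  have step : ∀ i : Fin (m+1) → Fin (n+1),
      (∏ j, (ld n c ω (i j) : ℂ)) * ∫ s : ℝ, (s : ℂ) ^ k * f i (x + s • ld n c ω)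
        = (ld n c ω (i (Fin.last m)) : ℂ) * (∏ j : Fin m, (ld n c ω (i (Fin.castSucc j)) : ℂ)) *
            ∫ s : ℝ, (s : ℂ) ^ k * f i (x + s • ld n c ω) := by
    intro i
    rw [Fin.prod_univ_castSucc]
    ring
  rw [Finset.sum_congr rfl fun i _ => step i]
  rw [sum_snoc_split (fun p => (ld n c ω p : ℂ)) (fun p => (ld n c ω p : ℂ))
    (fun i => ∫ s : ℝ, (s : ℂ) ^ k * f i (x + s • ld n c ω))]
  rfl

lemma mlrt_param_hasDerivAt {n m : ℕ} {c : ℝ} (hc : 0 < c) (k : ℕ)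
    (f : (Fin (m+1) → Fin (n+1)) → (Fin (n+1) → ℝ) → ℂ)
    (hreg : IsCc n (m+1) f)
    {ψ φ dψ dφ : ℝ → Fin (n+1) → ℝ}
    (hψ : ∀ t, HasDerivAt ψ (dψ t) t) (hφ : ∀ t, HasDerivAt φ (dφ t) t)
    (hdψ : Continuous dψ) (hdφ : Continuous dφ)
    (hψ0 : ∀ t, ψ t 0 = ψ 0 0) (hφ0 : ∀ t, φ t 0 = c) :
    HasDerivAt (fun t => ∑ i : Fin (m+1) → Fin (n+1),
        (∏ j, ((φ t (i j) : ℝ) : ℂ)) * ∫ s : ℝ, (s:ℂ)^k * f i (ψ t + s • φ t))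
      (∑ i : Fin (m+1) → Fin (n+1),
        ((∑ j₀, ((dφ 0 (i j₀) : ℝ):ℂ) * (∏ j ∈ Finset.univ.erase j₀, ((φ 0 (i j) : ℝ):ℂ)))
            * (∫ s : ℝ, (s:ℂ)^k * f i (ψ 0 + s • φ 0))
          + (∏ j, ((φ 0 (i j) :ℝ):ℂ)) *
            ∫ s : ℝ, (s:ℂ)^k * fderiv ℝ (f i) (ψ 0 + s • φ 0) (dψ 0 + s • dφ 0))) 0 := by
  refine HasDerivAt.fun_sum
    (A := fun (i : Fin (m+1) → Fin (n+1)) (t : ℝ) =>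
      (∏ j, ((φ t (i j) : ℝ) : ℂ)) * ∫ s : ℝ, (s:ℂ)^k * f i (ψ t + s • φ t))
    (A' := fun (i : Fin (m+1) → Fin (n+1)) =>
      (∑ j₀, ((dφ 0 (i j₀) : ℝ):ℂ) * (∏ j ∈ Finset.univ.erase j₀, ((φ 0 (i j) : ℝ):ℂ)))
            * (∫ s : ℝ, (s:ℂ)^k * f i (ψ 0 + s • φ 0))
          + (∏ j, ((φ 0 (i j) :ℝ):ℂ)) *
            ∫ s : ℝ, (s:ℂ)^k * fderiv ℝ (f i) (ψ 0 + s • φ 0) (dψ 0 + s • dφ 0))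
    fun i _ => ?_
  have hP : HasDerivAt (fun t => ∏ j, ((φ t (i j) : ℝ):ℂ))
      (∑ j₀, (∏ j ∈ Finset.univ.erase j₀, ((φ 0 (i j) : ℝ):ℂ)) • ((dφ 0 (i j₀) : ℝ):ℂ)) 0 := by
    apply HasDerivAt.fun_finsetProd
    intro j _
    exact (hasDerivAt_pi.1 (hφ 0) (i j)).ofReal_comp
  have hI := key_hasDerivAt (hreg i).1 (hreg i).2 k hc hψ hφ hdψ hdφ hψ0 hφ0
  have hmul := hP.mul hI
  have hcomm : (∑ j₀, ((dφ 0 (i j₀) : ℝ):ℂ) * (∏ j ∈ Finset.univ.erase j₀, ((φ 0 (i j) : ℝ):ℂ)))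
      = ∑ j₀, (∏ j ∈ Finset.univ.erase j₀, ((φ 0 (i j) : ℝ):ℂ)) • ((dφ 0 (i j₀) : ℝ):ℂ) := by
    refine Finset.sum_congr rfl fun j₀ _ => ?_
    rw [smul_eq_mul, mul_comm]
  simp only [hcomm]
  exact hmul

lemma claimX {n m : ℕ} {c : ℝ} (hc : 0 < c) (k : ℕ)
    (f : (Fin (m+1) → Fin (n+1)) → (Fin (n+1) → ℝ) → ℂ)
    (hreg : IsCc n (m+1) f)
    (x : Fin (n+1) → ℝ) (ω : Fin n → ℝ) (w : Fin (n+1) → ℝ) (hw : w 0 = 0)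
    (hzero : ∀ t : ℝ, mlrt n (m+1) c k f (x + t • w) ω = 0) :
    ∑ i : Fin (m+1) → Fin (n+1), (∏ j, (ld n c ω (i j) : ℂ)) *
        ∫ s : ℝ, (s:ℂ)^k * fderiv ℝ (f i) (x + s • ld n c ω) w = 0 := by
  have hψ : ∀ t : ℝ, HasDerivAt (fun t : ℝ => x + t • w) w t := fun t => by
    simpa using ((hasDerivAt_id t).smul_const w).const_add x
  have hφ : ∀ t : ℝ, HasDerivAt (fun _ : ℝ => ld n c ω) ((fun _ : ℝ => (0 : Fin (n+1) → ℝ)) t) t :=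
    fun t => hasDerivAt_const _ _
  have H := mlrt_param_hasDerivAt hc k f hreg (ψ := fun t : ℝ => x + t • w)
      (dψ := fun _ : ℝ => w) (φ := fun _ : ℝ => ld n c ω) (dφ := fun _ : ℝ => 0)
      hψ hφ continuous_const continuous_const
      (fun t => by simp [hw]) (fun t => by simp [ld])
  have H' : HasDerivAt (fun t : ℝ => mlrt n (m+1) c k f (x + t • w) ω)
      (∑ i : Fin (m+1) → Fin (n+1),
        ((∑ j₀, (((0 : Fin (n+1) → ℝ) (i j₀) : ℝ):ℂ) *
              (∏ j ∈ Finset.univ.erase j₀, ((ld n c ω (i j) : ℝ):ℂ)))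
            * (∫ s : ℝ, (s:ℂ)^k * f i ((x + (0:ℝ) • w) + s • ld n c ω))
          + (∏ j, ((ld n c ω (i j) :ℝ):ℂ)) *
            ∫ s : ℝ, (s:ℂ)^k * fderiv ℝ (f i) ((x + (0:ℝ) • w) + s • ld n c ω)
              (w + s • (0 : Fin (n+1) → ℝ)))) 0 := H
  have hz : HasDerivAt (fun t : ℝ => mlrt n (m+1) c k f (x + t • w) ω) 0 0 := by
    have heq : (fun t : ℝ => mlrt n (m+1) c k f (x + t • w) ω) = fun _ => (0:ℂ) :=
      funext fun t => hzero t
    rw [heq]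
    exact hasDerivAt_const _ _
  have hD := H'.unique hz
  rw [← hD]
  refine (Finset.sum_congr rfl fun i _ => ?_).symm
  simp only [Pi.zero_apply, Complex.ofReal_zero, zero_mul, Finset.sum_const_zero,
    zero_smul, add_zero, smul_zero, zero_add]

end Helpers

section ClaimOmega

open Filter Topology

set_option maxHeartbeats 1000000 in
lemma claimOmega {n m : ℕ} {c : ℝ} (hc : 0 < c) (k : ℕ) (hk : k ≤ m)
    (f : (Fin (m+1) → Fin (n+1)) → (Fin (n+1) → ℝ) → ℂ)
    (hsym : IsSymmF n (m+1) f) (hreg : IsCc n (m+1) f)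
    (ω₀ : Fin n → ℝ) (δ : ℝ)
    (h : ∀ k ≤ m + 1, ∀ (x : Fin (n + 1) → ℝ) (ω : Fin n → ℝ), inBall n ω₀ δ ω →
      mlrt n (m + 1) c k f x ω = 0)
    (x : Fin (n+1) → ℝ) (ω : Fin n → ℝ) (hω : inBall n ω₀ δ ω)
    (v : Fin n → ℝ) (r : ℝ) (hr : 0 < r) (hv2 : ∑ q, v q ^ 2 = r ^ 2)
    (hvo : ∑ q, ω q * v q = 0) :
    ∑ q : Fin n, ((v q : ℝ):ℂ) * mlrt n m c k (fun a y => f (Fin.snoc a q.succ) y) x ω = 0 := by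
  have hr' : r ≠ 0 := hr.ne'
  set γ : ℝ → Fin n → ℝ := fun t q => Real.cos (r*t) * ω q + Real.sin (r*t) / r * v q with hγdef
  set dγ : ℝ → Fin n → ℝ :=
    fun t q => -Real.sin (r*t) * r * ω q + Real.cos (r*t) * r / r * v q with hdγdef
  have hγ0 : γ 0 = ω := by funext q; simp [hγdef]
  have hdγ0 : dγ 0 = v := by
    funext q
    simp only [hdγdef, mul_zero, Real.sin_zero, Real.cos_zero, neg_zero, zero_mul, one_mul,
      zero_add]
    field_simp
  have hγc : ∀ (t : ℝ) q, HasDerivAt (fun t => γ t q) (dγ t q) t := by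
    intro t q
    have h1 : HasDerivAt (fun t : ℝ => r * t) r t := by
      simpa using (hasDerivAt_id t).const_mul r
    have hcos : HasDerivAt (fun t : ℝ => Real.cos (r*t)) (-Real.sin (r*t) * r) t :=
      (Real.hasDerivAt_cos (r*t)).comp t h1
    have hsin : HasDerivAt (fun t : ℝ => Real.sin (r*t)) (Real.cos (r*t) * r) t :=
      (Real.hasDerivAt_sin (r*t)).comp t h1
    exact (hcos.mul_const (ω q)).add ((hsin.div_const r).mul_const (v q))
  have hφd : ∀ t, HasDerivAt (fun t => ld n c (γ t)) (Fin.cons 0 (dγ t) : Fin (n+1) → ℝ) t := by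
    intro t
    rw [hasDerivAt_pi]
    intro p
    refine Fin.cases ?_ ?_ p
    · simp only [ld, Fin.cons_zero]
      exact hasDerivAt_const _ _
    · intro q
      simp only [ld, Fin.cons_succ]
      exact hγc t q
  have hdφc : Continuous fun t => (Fin.cons 0 (dγ t) : Fin (n+1) → ℝ) := by
    apply continuous_pi
    intro p
    refine Fin.cases ?_ ?_ p
    · simp only [Fin.cons_zero]; exact continuous_const
    · intro q
      simp only [Fin.cons_succ, hdγdef]
      fun_prop
  have H := mlrt_param_hasDerivAt hc k f hreg (ψ := fun _ : ℝ => x) (dψ := fun _ : ℝ => 0)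
      (φ := fun t => ld n c (γ t)) (dφ := fun t => (Fin.cons 0 (dγ t) : Fin (n+1) → ℝ))
      (fun t => hasDerivAt_const _ _) hφd continuous_const hdφc
      (fun t => rfl) (fun t => by simp [ld])
  have hsph : ∀ t, onSphere n (γ t) := by
    intro t
    have expand : ∑ q, (γ t q)^2
        = Real.cos (r*t)^2 * (∑ q, ω q ^2)
          + (2 * Real.cos (r*t) * (Real.sin (r*t)/r)) * (∑ q, ω q * v q)
          + (Real.sin (r*t)/r)^2 * (∑ q, v q ^2) := by
      rw [Finset.mul_sum, Finset.mul_sum, Finset.mul_sum, ← Finset.sum_add_distrib,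
        ← Finset.sum_add_distrib]
      refine Finset.sum_congr rfl fun q _ => ?_
      simp only [hγdef]
      ring
    show (∑ q, (γ t q)^2) = 1
    rw [expand, hω.1, hvo, hv2]
    have hs2 : (Real.sin (r*t)/r)^2 * r^2 = Real.sin (r*t)^2 := by
      field_simp
    rw [mul_one, mul_zero, add_zero, hs2]
    exact Real.cos_sq_add_sin_sq (r*t)
  have hball : ∀ᶠ t in 𝓝 (0:ℝ), inBall n ω₀ δ (γ t) := by
    have hcont : Continuous fun t => ∑ q, (γ t q - ω₀ q)^2 := by
      apply continuous_finset_sum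
      intro q _
      simp only [hγdef]
      fun_prop
    have h0 : (∑ q, (γ 0 q - ω₀ q)^2) < δ^2 := by rw [hγ0]; exact hω.2
    exact ((hcont.tendsto 0).eventually_lt_const h0).mono fun t ht => ⟨hsph t, ht⟩
  have hzfun : HasDerivAt (fun t : ℝ => ∑ i : Fin (m+1) → Fin (n+1),
      (∏ j, ((ld n c (γ t) (i j) : ℝ):ℂ)) *
        ∫ s : ℝ, (s:ℂ)^k * f i (x + s • ld n c (γ t))) 0 0 := by
    have hev : (fun t : ℝ => ∑ i : Fin (m+1) → Fin (n+1),
        (∏ j, ((ld n c (γ t) (i j) : ℝ):ℂ)) *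
          ∫ s : ℝ, (s:ℂ)^k * f i (x + s • ld n c (γ t))) =ᶠ[𝓝 (0:ℝ)] fun _ => (0:ℂ) := by
      filter_upwards [hball] with t ht using h k (hk.trans (Nat.le_succ m)) x (γ t) ht
    have hval : (∑ i : Fin (m+1) → Fin (n+1),
        (∏ j, ((ld n c (γ 0) (i j) : ℝ):ℂ)) *
          ∫ s : ℝ, (s:ℂ)^k * f i (x + s • ld n c (γ 0))) = (0:ℂ) := by
      rw [hγ0]
      exact h k (hk.trans (Nat.le_succ m)) x ω hω
    exact HasDerivAt.congr_of_eventuallyEq (hasDerivAt_const (0:ℝ) (0:ℂ)) hev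
  have hD := H.unique hzfun
  simp only [hγ0, hdγ0] at hD
  -- second part vanishes by claimX
  have hJ : ∀ i : Fin (m+1) → Fin (n+1),
      (∫ s : ℝ, (s:ℂ)^k * fderiv ℝ (f i) (x + s • ld n c ω) (0 + s • ((Fin.cons (0:ℝ) v : Fin (n+1) → ℝ))))
        = ∫ s : ℝ, (s:ℂ)^(k+1) * fderiv ℝ (f i) (x + s • ld n c ω) ((Fin.cons (0:ℝ) v : Fin (n+1) → ℝ)) := by
    intro i
    apply integral_congr_ae
    apply Filter.Eventually.of_forall
    intro s
    show (s:ℂ)^k * fderiv ℝ (f i) (x + s • ld n c ω)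
        (0 + s • ((Fin.cons (0:ℝ) v : Fin (n+1) → ℝ)))
      = (s:ℂ)^(k+1) * fderiv ℝ (f i) (x + s • ld n c ω) ((Fin.cons (0:ℝ) v : Fin (n+1) → ℝ))
    rw [zero_add, (fderiv ℝ (f i) (x + s • ld n c ω)).map_smul, Complex.real_smul, pow_succ]
    ring
  have hzero2 : ∀ t : ℝ, mlrt n (m+1) c (k+1) f (x + t • ((Fin.cons (0:ℝ) v : Fin (n+1) → ℝ))) ω = 0 :=
    fun t => h (k+1) (Nat.succ_le_succ hk) _ ω hω
  have hX := claimX hc (k+1) f hreg x ω ((Fin.cons (0:ℝ) v : Fin (n+1) → ℝ)) (by simp) hzero2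
  rw [Finset.sum_add_distrib] at hD
  have hsecond : ∑ i : Fin (m+1) → Fin (n+1), (∏ j, ((ld n c ω (i j) : ℝ):ℂ)) *
      ∫ s : ℝ, (s:ℂ)^k * fderiv ℝ (f i) (x + s • ld n c ω) (0 + s • ((Fin.cons (0:ℝ) v : Fin (n+1) → ℝ))) = 0 := by
    rw [Finset.sum_congr rfl fun i _ => by rw [hJ i]]
    exact hX
  rw [hsecond, add_zero] at hD
  -- now the first part
  have hswap : ∀ j₀ : Fin (m+1),
      ∑ i : Fin (m+1) → Fin (n+1), (((Fin.cons (0:ℝ) v : Fin (n+1) → ℝ) (i j₀) : ℝ):ℂ) *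
          (∏ j ∈ (univ : Finset (Fin (m+1))).erase j₀, ((ld n c ω (i j) : ℝ):ℂ)) *
          (∫ s : ℝ, (s:ℂ)^k * f i (x + s • ld n c ω))
        = ∑ i : Fin (m+1) → Fin (n+1), (((Fin.cons (0:ℝ) v : Fin (n+1) → ℝ) (i (Fin.last m)) : ℝ):ℂ) *
          (∏ j ∈ (univ : Finset (Fin (m+1))).erase (Fin.last m), ((ld n c ω (i j) : ℝ):ℂ)) *
          (∫ s : ℝ, (s:ℂ)^k * f i (x + s • ld n c ω)) := by
    intro j₀
    exact swap_to_last (fun p => (((Fin.cons (0:ℝ) v : Fin (n+1) → ℝ) p : ℝ):ℂ))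
      (fun p => ((ld n c ω p : ℝ):ℂ))
      (fun i => ∫ s : ℝ, (s:ℂ)^k * f i (x + s • ld n c ω))
      (fun σ i => by simp only [hsym σ i]) j₀
  have hfirst : ∑ i : Fin (m+1) → Fin (n+1),
      (∑ j₀, (((Fin.cons (0:ℝ) v : Fin (n+1) → ℝ) (i j₀) : ℝ):ℂ) *
        (∏ j ∈ (univ : Finset (Fin (m+1))).erase j₀, ((ld n c ω (i j) : ℝ):ℂ)))
        * (∫ s : ℝ, (s:ℂ)^k * f i (x + s • ld n c ω))
      = ((m+1 : ℕ) : ℂ) * ∑ i : Fin (m+1) → Fin (n+1),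
          (((Fin.cons (0:ℝ) v : Fin (n+1) → ℝ) (i (Fin.last m)) : ℝ):ℂ) *
          (∏ j ∈ (univ : Finset (Fin (m+1))).erase (Fin.last m), ((ld n c ω (i j) : ℝ):ℂ)) *
          (∫ s : ℝ, (s:ℂ)^k * f i (x + s • ld n c ω)) := by
    calc ∑ i : Fin (m+1) → Fin (n+1),
        (∑ j₀, (((Fin.cons (0:ℝ) v : Fin (n+1) → ℝ) (i j₀) : ℝ):ℂ) *
          (∏ j ∈ (univ : Finset (Fin (m+1))).erase j₀, ((ld n c ω (i j) : ℝ):ℂ)))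
          * (∫ s : ℝ, (s:ℂ)^k * f i (x + s • ld n c ω))
        = ∑ i : Fin (m+1) → Fin (n+1), ∑ j₀ : Fin (m+1),
            (((Fin.cons (0:ℝ) v : Fin (n+1) → ℝ) (i j₀) : ℝ):ℂ) *
            (∏ j ∈ (univ : Finset (Fin (m+1))).erase j₀, ((ld n c ω (i j) : ℝ):ℂ)) *
            (∫ s : ℝ, (s:ℂ)^k * f i (x + s • ld n c ω)) := by
          exact Finset.sum_congr rfl fun i _ => Finset.sum_mul _ _ _
      _ = ∑ j₀ : Fin (m+1), ∑ i : Fin (m+1) → Fin (n+1),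
            (((Fin.cons (0:ℝ) v : Fin (n+1) → ℝ) (i j₀) : ℝ):ℂ) *
            (∏ j ∈ (univ : Finset (Fin (m+1))).erase j₀, ((ld n c ω (i j) : ℝ):ℂ)) *
            (∫ s : ℝ, (s:ℂ)^k * f i (x + s • ld n c ω)) := Finset.sum_comm
      _ = ∑ j₀ : Fin (m+1), ∑ i : Fin (m+1) → Fin (n+1),
            (((Fin.cons (0:ℝ) v : Fin (n+1) → ℝ) (i (Fin.last m)) : ℝ):ℂ) *
            (∏ j ∈ (univ : Finset (Fin (m+1))).erase (Fin.last m), ((ld n c ω (i j) : ℝ):ℂ)) *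
            (∫ s : ℝ, (s:ℂ)^k * f i (x + s • ld n c ω)) :=
          Finset.sum_congr rfl fun j₀ _ => hswap j₀
      _ = ((m+1 : ℕ) : ℂ) * ∑ i : Fin (m+1) → Fin (n+1),
            (((Fin.cons (0:ℝ) v : Fin (n+1) → ℝ) (i (Fin.last m)) : ℝ):ℂ) *
            (∏ j ∈ (univ : Finset (Fin (m+1))).erase (Fin.last m), ((ld n c ω (i j) : ℝ):ℂ)) *
            (∫ s : ℝ, (s:ℂ)^k * f i (x + s • ld n c ω)) := by
          rw [Finset.sum_const, Finset.card_univ, Fintype.card_fin, nsmul_eq_mul]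
  rw [hfirst] at hD
  have hTlast : ∑ i : Fin (m+1) → Fin (n+1),
      (((Fin.cons (0:ℝ) v : Fin (n+1) → ℝ) (i (Fin.last m)) : ℝ):ℂ) *
      (∏ j ∈ (univ : Finset (Fin (m+1))).erase (Fin.last m), ((ld n c ω (i j) : ℝ):ℂ)) *
      (∫ s : ℝ, (s:ℂ)^k * f i (x + s • ld n c ω)) = 0 := by
    rcases mul_eq_zero.1 hD with h' | h'
    · exact absurd h' (by exact_mod_cast Nat.succ_ne_zero m)
    · exact h'
  rw [Finset.sum_congr rfl (fun i _ => by
    rw [prod_erase_last (fun j => ((ld n c ω (i j) : ℝ):ℂ))]),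
    sum_snoc_split (fun p => (((Fin.cons (0:ℝ) v : Fin (n+1) → ℝ) p : ℝ):ℂ)) (fun p => ((ld n c ω p : ℝ):ℂ))
      (fun i => ∫ s : ℝ, (s:ℂ)^k * f i (x + s • ld n c ω))] at hTlast
  rw [Fin.sum_univ_succ] at hTlast
  simp only [Fin.cons_zero, Fin.cons_succ, Complex.ofReal_zero, zero_mul, zero_add] at hTlast
  calc ∑ q : Fin n, ((v q : ℝ):ℂ) * mlrt n m c k (fun a y => f (Fin.snoc a q.succ) y) x ω
      = ∑ q : Fin n, ((v q : ℝ):ℂ) *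
          ∑ a : Fin m → Fin (n+1), (∏ j, ((ld n c ω (a j) : ℝ):ℂ)) *
            (∫ s : ℝ, (s:ℂ)^k * f (Fin.snoc a q.succ) (x + s • ld n c ω)) := rfl
    _ = 0 := hTlast

end ClaimOmega

/-- Let `f` be a smooth compactly supported symmetric tensor field of
rank `m + 1` (i.e. rank `≥ 1`). If `L̃^{m+1,k} f` vanishes for all `k = 0,…,m+1`, all
base points and all `ω ∈ B_n(ω₀, δ)`, then for all `k = 0,…,m`, every `i ∈ {1,…,n}`,
every base point and every `ω ∈ B_n(ω₀, δ)`: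
`L̃^{m,k}((f)_i) = −c ω_i · L̃^{m,k}((f)_0)`, where `(f)_p` has components
`((f)_p)_{i_1…i_m} = f_{i_1…i_m p}`. -/
theorem mlrt_column_relation
    (n m : ℕ) (hn : 2 ≤ n) (c : ℝ) (hc : 0 < c)
    (ω₀ : Fin n → ℝ) (hω₀ : onSphere n ω₀) (δ : ℝ) (hδ : 0 < δ)
    (f : (Fin (m + 1) → Fin (n + 1)) → (Fin (n + 1) → ℝ) → ℂ)
    (hsym : IsSymmF n (m + 1) f) (hreg : IsCc n (m + 1) f)
    (h : ∀ k ≤ m + 1, ∀ (x : Fin (n + 1) → ℝ) (ω : Fin n → ℝ), inBall n ω₀ δ ω →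
      mlrt n (m + 1) c k f x ω = 0) :
    ∀ k ≤ m, ∀ (i : Fin n) (x : Fin (n + 1) → ℝ) (ω : Fin n → ℝ), inBall n ω₀ δ ω →
      mlrt n m c k (fun a y => f (Fin.snoc a i.succ) y) x ω
        = -((c * ω i : ℝ) : ℂ) * mlrt n m c k (fun a y => f (Fin.snoc a 0) y) x ω := by
  intro k hk i x ω hω
  -- decomposition identity
  have hdec := mlrt_succ c k f x ω
  rw [h k (hk.trans (Nat.le_succ m)) x ω hω, Fin.sum_univ_succ] at hdec
  simp only [ld, Fin.cons_zero, Fin.cons_succ] at hdec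
  -- hdec : 0 = c * M 0 + ∑ q, ω q * M q.succ
  have hE2 : ∀ v : Fin n → ℝ, (∑ q, ω q * v q = 0) →
      ∑ q : Fin n, ((v q : ℝ):ℂ) * mlrt n m c k (fun a y => f (Fin.snoc a q.succ) y) x ω = 0 := by
    intro v hvo
    by_cases hv : v = 0
    · simp [hv]
    · have hq := Function.ne_iff.1 hv
      obtain ⟨q₀, hq₀⟩ := hq
      have hpos : 0 < ∑ q, v q ^ 2 := by
        refine Finset.sum_pos' (fun q _ => sq_nonneg _) ⟨q₀, Finset.mem_univ _, ?_⟩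
        exact lt_of_le_of_ne (sq_nonneg _) (Ne.symm (pow_ne_zero 2 hq₀))
      exact claimOmega hc k hk f hsym hreg ω₀ δ h x ω hω v (Real.sqrt (∑ q, v q ^ 2))
        (Real.sqrt_pos.2 hpos) (by rw [Real.sq_sqrt hpos.le]) hvo
  set v : Fin n → ℝ := fun q => (if q = i then (1:ℝ) else 0) - ω i * ω q with hvdef
  have horth : ∑ q, ω q * v q = 0 := by
    have h1 : ∑ q, ω q * (if q = i then (1:ℝ) else 0) = ω i := by
      simp [mul_ite]
    have h2 : ∑ q, ω q * (ω i * ω q) = ω i * ∑ q, ω q ^ 2 := by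
      rw [Finset.mul_sum]
      exact Finset.sum_congr rfl fun q _ => by ring
    simp only [hvdef, mul_sub]
    rw [Finset.sum_sub_distrib, h1, h2, hω.1, mul_one, sub_self]
  have hv0 := hE2 v horth
  have hexp : ∀ q : Fin n, ((v q : ℝ):ℂ)
      = (if q = i then (1:ℂ) else 0) - ((ω i : ℝ):ℂ) * ((ω q : ℝ):ℂ) := by
    intro q
    simp only [hvdef]
    push_cast [apply_ite (fun t : ℝ => (t : ℂ))]
    ring
  rw [Finset.sum_congr rfl (fun q _ => by rw [hexp q, sub_mul, mul_assoc]),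
    Finset.sum_sub_distrib, ← Finset.mul_sum] at hv0
  have hix : ∑ q : Fin n, (if q = i then (1:ℂ) else 0) *
      mlrt n m c k (fun a y => f (Fin.snoc a q.succ) y) x ω
        = mlrt n m c k (fun a y => f (Fin.snoc a i.succ) y) x ω := by
    simp [ite_mul]
  rw [hix] at hv0
  push_cast
  linear_combination hv0 - ((ω i : ℝ):ℂ) * hdec
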